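/- Let b be a connected transient graph over (X,m) with bottom of spectrum λ₀ > 0. Fix o ∈ X, a finite set Ω containing o, and let g(x) = G(o,x) be the Green's function and C = sup_{x ∈ ∂Ω} g(x). Then ‖g‖_{ℓ²(X\Ω,m)} ≤ (C/√λ₀)·√cap(Ω); in particular g ∈ ℓ²(X,m). -/

import Mathlib

/-!
Let `E` be the equilibrium potential of `Ω`: the increasing limit, over finite sets `T`, of the
solutions `e_T` of the Dirichlet problem `e_T = 1` on `Ω`, `e_T = 0` off `T ∪ Ω`, `L e_T = 0` on
`T \ Ω`, each obtained by a monotone Perron iteration. By the Dirichlet principle `Q(e_T) ≤ Q(φ)`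
for every admissible `φ` supported in `T`, so `λ₀ ‖e_T‖² ≤ Q(φ)` and in the limit
`λ₀ ‖E‖² ≤ cap(Ω)`. As `E` is harmonic off `Ω` and equal to `1` on `Ω`, the function equal to `g`
on `Ω` and to `min(g, C E)` off `Ω` is a nonnegative supersolution of `L h ≥ 𝟙_o`; the Perron
iteration below it produces a solution, so minimality of `g` gives `g ≤ C E` off `Ω`.
-/

open scoped ENNReal

/-- The energy form of a weighted graph: `Q(φ) = (1/2) Σ_{x,y} b(x,y)(φ(x) − φ(y))²`. -/
noncomputable def energyForm {X : Type*} (b : X → X → ℝ) (φ : X → ℝ) : ℝ :=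
  (1 / 2) * ∑' p : X × X, b p.1 p.2 * (φ p.1 - φ p.2) ^ 2

/-- The capacity of a finite set `Ω`:
`cap(Ω) = inf {Q(φ) : φ finitely supported, φ = 1 on Ω}`. -/
noncomputable def graphCap {X : Type*} (b : X → X → ℝ) (Ω : Finset X) : ℝ :=
  sInf {q : ℝ | ∃ φ : X → ℝ, (Function.support φ).Finite ∧ (∀ x ∈ Ω, φ x = 1) ∧
    q = energyForm b φ}

open Filter Topology Function

theorem tsum_ofReal_le_of_sum_le {ι : Type*} {f : ι → ℝ} {c : ℝ} (hf : 0 ≤ f)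
    (h : ∀ s : Finset ι, ∑ i ∈ s, f i ≤ c) : ∑' i, ENNReal.ofReal (f i) ≤ ENNReal.ofReal c := by
  have hsum := summable_of_sum_le hf h
  rw [← ENNReal.ofReal_tsum_of_nonneg hf hsum]
  exact ENNReal.ofReal_le_ofReal (hsum.tsum_le_of_sum_le h)

section Laplacian

variable {X : Type*} {b : X → X → ℝ}

noncomputable def graphDegree (b : X → X → ℝ) (x : X) : ℝ := ∑' y, b x y

noncomputable def graphLaplacian (b : X → X → ℝ) (u : X → ℝ) (x : X) : ℝ :=
  ∑' y, b x y * (u x - u y)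

theorem summable_mul_sub {u : X → ℝ} {x : X} (hrow : Summable fun y => b x y)
    (hu : Summable fun y => b x y * u y) : Summable fun y => b x y * (u x - u y) :=
  ((hrow.mul_right (u x)).sub hu).congr fun y => by ring

theorem graphLaplacian_eq_sub {u : X → ℝ} {x : X} (hrow : Summable fun y => b x y)
    (hu : Summable fun y => b x y * u y) :
    graphLaplacian b u x = u x * graphDegree b x - ∑' y, b x y * u y := by
  rw [graphLaplacian, graphDegree, ← tsum_mul_left, ← (hrow.mul_left (u x)).tsum_sub hu]
  exact tsum_congr fun y => by ring

theorem graphLaplacian_const_mul (c : ℝ) (u : X → ℝ) (x : X) :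
    graphLaplacian b (fun y => c * u y) x = c * graphLaplacian b u x := by
  rw [graphLaplacian, graphLaplacian, ← tsum_mul_left]
  exact tsum_congr fun y => by ring

theorem graphLaplacian_le_of_le (hb : ∀ x y, 0 ≤ b x y) {u h : X → ℝ} {x : X}
    (hrow : Summable fun y => b x y) (hu : Summable fun y => b x y * u y)
    (hh : Summable fun y => b x y * h y) (hle : ∀ y, 0 < b x y → h y ≤ u y) (heq : h x = u x) :
    graphLaplacian b u x ≤ graphLaplacian b h x := by
  refine (summable_mul_sub hrow hu).tsum_le_tsum (fun y => ?_) (summable_mul_sub hrow hh)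
  rcases (hb x y).eq_or_lt with hxy | hxy
  · simp [← hxy]
  · exact mul_le_mul_of_nonneg_left (by linarith [hle y hxy]) hxy.le

theorem summable_mul_of_le {c u w : X → ℝ} (hc : 0 ≤ c) (hu : 0 ≤ u) (huw : u ≤ w)
    (hw : Summable fun y => c y * w y) : Summable fun y => c y * u y :=
  hw.of_nonneg_of_le (fun y => mul_nonneg (hc y) (hu y))
    fun y => mul_le_mul_of_nonneg_left (huw y) (hc y)

theorem tendsto_tsum_mul_of_tendsto {ι : Type*} {l : Filter ι} {c v w : X → ℝ}
    {u : ι → X → ℝ} (hc : 0 ≤ c) (hw : Summable fun y => c y * w y)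
    (hu : ∀ y, Tendsto (u · y) l (𝓝 (v y))) (hu0 : ∀ i, 0 ≤ u i) (huw : ∀ i, u i ≤ w) :
    Tendsto (fun i => ∑' y, c y * u i y) l (𝓝 (∑' y, c y * v y)) :=
  tendsto_tsum_of_dominated_convergence hw (fun y => (hu y).const_mul (c y))
    (Eventually.of_forall fun i y => by
      rw [Real.norm_of_nonneg (mul_nonneg (hc y) (hu0 i y))]
      exact mul_le_mul_of_nonneg_left (huw i y) (hc y))

theorem graphDegree_pos_of_pos (hb : ∀ x y, 0 ≤ b x y) (hrow : ∀ x, Summable fun y => b x y)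
    {x y : X} (hxy : 0 < b x y) : 0 < graphDegree b x :=
  hxy.trans_le ((hrow x).le_tsum y fun z _ => hb x z)

theorem graphDegree_pos_of_graphLaplacian_ne_zero (hb : ∀ x y, 0 ≤ b x y)
    (hrow : ∀ x, Summable fun y => b x y) {u : X → ℝ} {x : X} (hu : graphLaplacian b u x ≠ 0) :
    0 < graphDegree b x := by
  obtain ⟨y, hy⟩ : ∃ y, b x y ≠ 0 := by
    by_contra! hzero
    exact hu (by simp [graphLaplacian, hzero])
  exact graphDegree_pos_of_pos hb hrow ((hb x y).lt_of_ne' hy)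

theorem graphDegree_pos_of_connected (hb : ∀ x y, 0 ≤ b x y)
    (hrow : ∀ x, Summable fun y => b x y)
    (hconn : ∀ x y : X, ∃ (k : ℕ) (γ : ℕ → X), γ 0 = x ∧ γ k = y ∧
      ∀ i < k, 0 < b (γ i) (γ (i + 1)))
    {o : X} (ho : 0 < graphDegree b o) (x : X) : 0 < graphDegree b x := by
  obtain ⟨k, γ, hγ0, hγk, hγ⟩ := hconn x o
  cases k with
  | zero => exact hγ0 ▸ hγk ▸ ho
  | succ k => exact graphDegree_pos_of_pos hb hrow (hγ0 ▸ hγ 0 k.succ_pos)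

end Laplacian

section Perron

variable {X : Type*} {b : X → X → ℝ} {D : Set X} {f u₀ w : X → ℝ}

structure IsSubSuperPair (b : X → X → ℝ) (D : Set X) (f u₀ w : X → ℝ) : Prop where
  nonneg : 0 ≤ u₀
  le : u₀ ≤ w
  summable : ∀ x, Summable fun y => b x y * w y
  sub : ∀ x ∈ D, graphLaplacian b u₀ x ≤ f x
  super : ∀ x ∈ D, f x ≤ graphLaplacian b w x

open Classical in
noncomputable def perronStep (b : X → X → ℝ) (D : Set X) (f u₀ u : X → ℝ) : X → ℝ :=
  fun x => if x ∈ D then (f x + ∑' y, b x y * u y) / graphDegree b x else u₀ x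

noncomputable def perronIter (b : X → X → ℝ) (D : Set X) (f u₀ : X → ℝ) (n : ℕ) : X → ℝ :=
  (perronStep b D f u₀)^[n] u₀

/-- The least solution `v ≥ u₀` of `L v = f` on `D` with `v = u₀` off `D`, whenever `u₀` has a
supersolution above it (see `IsSubSuperPair`). -/
noncomputable def minimalSolution (b : X → X → ℝ) (D : Set X) (f u₀ : X → ℝ) : X → ℝ :=
  fun x => ⨆ n, perronIter b D f u₀ n x

theorem perronStep_of_mem {u : X → ℝ} {x : X} (hx : x ∈ D) :
    perronStep b D f u₀ u x = (f x + ∑' y, b x y * u y) / graphDegree b x := by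
  simp [perronStep, hx]

theorem perronStep_of_notMem {u : X → ℝ} {x : X} (hx : x ∉ D) :
    perronStep b D f u₀ u x = u₀ x := by
  simp [perronStep, hx]

theorem perronIter_succ (n : ℕ) :
    perronIter b D f u₀ (n + 1) = perronStep b D f u₀ (perronIter b D f u₀ n) :=
  Function.iterate_succ_apply' _ _ _

theorem perronIter_of_notMem {x : X} (hx : x ∉ D) (n : ℕ) : perronIter b D f u₀ n x = u₀ x := by
  cases n with
  | zero => rfl
  | succ n => rw [perronIter_succ, perronStep_of_notMem hx]

theorem minimalSolution_of_notMem {x : X} (hx : x ∉ D) : minimalSolution b D f u₀ x = u₀ x := by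
  simp [minimalSolution, perronIter_of_notMem hx]

theorem perronStep_mono (hb : ∀ x y, 0 ≤ b x y) (hdeg : ∀ x, 0 < graphDegree b x)
    (hw : ∀ x, Summable fun y => b x y * w y) {u u' : X → ℝ} (hu : 0 ≤ u) (huu' : u ≤ u')
    (hu'w : u' ≤ w) : perronStep b D f u₀ u ≤ perronStep b D f u₀ u' := by
  intro x
  by_cases hx : x ∈ D
  · have hu' := summable_mul_of_le (hb x) (hu.trans huu') hu'w (hw x)
    have hsum := (summable_mul_of_le (hb x) hu huu' hu').tsum_le_tsum
      (fun y => mul_le_mul_of_nonneg_left (huu' y) (hb x y)) hu'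
    rw [perronStep_of_mem hx, perronStep_of_mem hx]
    exact div_le_div_of_nonneg_right (by linarith) (hdeg x).le
  · simp [perronStep_of_notMem hx]

theorem le_perronStep_self (hb : ∀ x y, 0 ≤ b x y) (hdeg : ∀ x, 0 < graphDegree b x)
    (hrow : ∀ x, Summable fun y => b x y) (h : IsSubSuperPair b D f u₀ w) :
    u₀ ≤ perronStep b D f u₀ u₀ := by
  intro x
  by_cases hx : x ∈ D
  · have hsub := h.sub x hx
    rw [graphLaplacian_eq_sub (hrow x) (summable_mul_of_le (hb x) h.nonneg h.le (h.summable x))]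
      at hsub
    rw [perronStep_of_mem hx, le_div_iff₀ (hdeg x)]
    linarith
  · rw [perronStep_of_notMem hx]

theorem perronStep_le_self (hdeg : ∀ x, 0 < graphDegree b x)
    (hrow : ∀ x, Summable fun y => b x y) (h : IsSubSuperPair b D f u₀ w) :
    perronStep b D f u₀ w ≤ w := by
  intro x
  by_cases hx : x ∈ D
  · have hsuper := h.super x hx
    rw [graphLaplacian_eq_sub (hrow x) (h.summable x)] at hsuper
    rw [perronStep_of_mem hx, div_le_iff₀ (hdeg x)]
    linarith
  · rw [perronStep_of_notMem hx]
    exact h.le x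

section Bounds

variable (hb : ∀ x y, 0 ≤ b x y) (hdeg : ∀ x, 0 < graphDegree b x)
  (hrow : ∀ x, Summable fun y => b x y) (h : IsSubSuperPair b D f u₀ w)
include hb hdeg hrow h

theorem perronIter_mem_Icc (n : ℕ) : perronIter b D f u₀ n ∈ Set.Icc u₀ w := by
  induction n with
  | zero => exact ⟨le_rfl, h.le⟩
  | succ n ih =>
    rw [perronIter_succ]
    exact ⟨(le_perronStep_self hb hdeg hrow h).trans
        (perronStep_mono hb hdeg h.summable h.nonneg ih.1 ih.2),
      (perronStep_mono hb hdeg h.summable (h.nonneg.trans ih.1) ih.2 le_rfl).trans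
        (perronStep_le_self hdeg hrow h)⟩

theorem monotone_perronIter : Monotone (perronIter b D f u₀) := by
  have hI := perronIter_mem_Icc hb hdeg hrow h
  refine monotone_nat_of_le_succ fun n => ?_
  induction n with
  | zero => exact le_perronStep_self hb hdeg hrow h
  | succ n ih =>
    have hstep := perronStep_mono (D := D) (f := f) (u₀ := u₀) hb hdeg h.summable
      (h.nonneg.trans (hI n).1) ih (hI (n + 1)).2
    rwa [← perronIter_succ, ← perronIter_succ] at hstep

theorem tendsto_perronIter (x : X) :
    Tendsto (perronIter b D f u₀ · x) atTop (𝓝 (minimalSolution b D f u₀ x)) :=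
  tendsto_atTop_ciSup (fun _ _ hmn => monotone_perronIter hb hdeg hrow h hmn x)
    ⟨w x, by
      rintro _ ⟨n, rfl⟩
      exact (perronIter_mem_Icc hb hdeg hrow h n).2 x⟩

theorem minimalSolution_le : minimalSolution b D f u₀ ≤ w := fun x =>
  ciSup_le fun n => (perronIter_mem_Icc hb hdeg hrow h n).2 x

theorem le_minimalSolution : u₀ ≤ minimalSolution b D f u₀ := fun x =>
  ge_of_tendsto' (tendsto_perronIter hb hdeg hrow h x)
    fun n => (perronIter_mem_Icc hb hdeg hrow h n).1 x

theorem graphLaplacian_minimalSolution {x : X} (hx : x ∈ D) :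
    graphLaplacian b (minimalSolution b D f u₀) x = f x := by
  set v := minimalSolution b D f u₀
  have hI := perronIter_mem_Icc hb hdeg hrow h
  have hlim := tendsto_perronIter hb hdeg hrow h
  have hL : Tendsto (fun n => perronIter b D f u₀ (n + 1) x * graphDegree b x) atTop
      (𝓝 (v x * graphDegree b x)) :=
    ((hlim x).comp (tendsto_add_atTop_nat 1)).mul_const _
  have hR : Tendsto (fun n => f x + ∑' y, b x y * perronIter b D f u₀ n y) atTop
      (𝓝 (f x + ∑' y, b x y * v y)) :=
    (tendsto_tsum_mul_of_tendsto (hb x) (h.summable x) hlim (fun n => h.nonneg.trans (hI n).1)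
      fun n => (hI n).2).const_add _
  have hstep : ∀ n, perronIter b D f u₀ (n + 1) x * graphDegree b x =
      f x + ∑' y, b x y * perronIter b D f u₀ n y := fun n => by
    rw [perronIter_succ, perronStep_of_mem hx, div_mul_cancel₀ _ (hdeg x).ne']
  rw [graphLaplacian_eq_sub (hrow x) (summable_mul_of_le (hb x)
      (h.nonneg.trans (le_minimalSolution hb hdeg hrow h)) (minimalSolution_le hb hdeg hrow h)
      (h.summable x)),
    tendsto_nhds_unique hL (hR.congr fun n => (hstep n).symm)]
  ring

end Bounds

end Perron

section Equilibrium

variable {X : Type*} {b : X → X → ℝ}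

noncomputable def equilibriumPotentialOn (b : X → X → ℝ) (Ω T : Finset X) : X → ℝ :=
  minimalSolution b (↑T \ ↑Ω) 0 ((↑Ω : Set X).indicator 1)

noncomputable def equilibriumPotential (b : X → X → ℝ) (Ω : Finset X) : X → ℝ :=
  fun x => ⨆ T : Finset X, equilibriumPotentialOn b Ω T x

theorem isSubSuperPair_indicator (hb : ∀ x y, 0 ≤ b x y) (hrow : ∀ x, Summable fun y => b x y)
    {Ω : Finset X} {D : Set X} (hD : ∀ x ∈ D, x ∉ Ω) {w : X → ℝ} (hw0 : 0 ≤ w)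
    (hw1 : w ≤ 1) (hΩw : ∀ x ∈ Ω, w x = 1) (hw : ∀ x ∈ D, 0 ≤ graphLaplacian b w x) :
    IsSubSuperPair b D 0 ((↑Ω : Set X).indicator 1) w where
  nonneg := Set.indicator_nonneg fun _ _ => zero_le_one
  le x := by
    by_cases hx : x ∈ Ω
    · simp [hx, hΩw x hx]
    · simpa [hx] using hw0 x
  summable x := summable_mul_of_le (hb x) hw0 hw1 (by simpa using hrow x)
  sub x hx := by
    have h0 : 0 ≤ (↑Ω : Set X).indicator (1 : X → ℝ) :=
      Set.indicator_nonneg fun _ _ => zero_le_one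
    have h1 : (↑Ω : Set X).indicator (1 : X → ℝ) ≤ 1 :=
      Set.indicator_le_self' fun _ _ => zero_le_one
    rw [graphLaplacian_eq_sub (hrow x) (summable_mul_of_le (hb x) h0 h1 (by simpa using hrow x)),
      Set.indicator_of_notMem (by simpa using hD x hx)]
    simpa using tsum_nonneg fun y => mul_nonneg (hb x y) (h0 y)
  super := hw

theorem equilibriumPotentialOn_of_mem {Ω : Finset X} (T : Finset X) {x : X} (hx : x ∈ Ω) :
    equilibriumPotentialOn b Ω T x = 1 := by
  rw [equilibriumPotentialOn, minimalSolution_of_notMem fun h => h.2 hx]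
  simp [hx]

theorem equilibriumPotentialOn_of_notMem {Ω T : Finset X} {x : X} (hxT : x ∉ T) (hxΩ : x ∉ Ω) :
    equilibriumPotentialOn b Ω T x = 0 := by
  rw [equilibriumPotentialOn, minimalSolution_of_notMem fun h => hxT h.1]
  simp [hxΩ]

theorem support_equilibriumPotentialOn_finite (Ω T : Finset X) :
    (support (equilibriumPotentialOn b Ω T)).Finite :=
  (T.finite_toSet.union Ω.finite_toSet).subset fun x hx => by
    by_contra h
    simp only [Set.mem_union, Finset.mem_coe, not_or] at h
    exact hx (equilibriumPotentialOn_of_notMem h.1 h.2)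

variable (hb : ∀ x y, 0 ≤ b x y) (hdeg : ∀ x, 0 < graphDegree b x)
  (hrow : ∀ x, Summable fun y => b x y)
include hb hdeg hrow

theorem equilibriumPotentialOn_mem_Icc (Ω T : Finset X) :
    equilibriumPotentialOn b Ω T ∈ Set.Icc 0 1 := by
  have h := isSubSuperPair_indicator hb hrow (D := ↑T \ ↑Ω) (fun x hx => hx.2) zero_le_one
    le_rfl (fun _ _ => rfl) fun x _ => by simp [graphLaplacian]
  exact ⟨h.nonneg.trans (le_minimalSolution hb hdeg hrow h), minimalSolution_le hb hdeg hrow h⟩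

theorem graphLaplacian_equilibriumPotentialOn {Ω T : Finset X} {x : X} (hxT : x ∈ T)
    (hxΩ : x ∉ Ω) : graphLaplacian b (equilibriumPotentialOn b Ω T) x = 0 :=
  graphLaplacian_minimalSolution hb hdeg hrow (isSubSuperPair_indicator hb hrow
    (fun x hx => hx.2) zero_le_one le_rfl (fun _ _ => rfl) fun x _ => by simp [graphLaplacian])
    ⟨hxT, hxΩ⟩

theorem equilibriumPotentialOn_mono (Ω : Finset X) : Monotone (equilibriumPotentialOn b Ω) :=
  fun T T' hTT' => by
    obtain ⟨h0, h1⟩ := equilibriumPotentialOn_mem_Icc hb hdeg hrow Ω T'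
    exact minimalSolution_le hb hdeg hrow (isSubSuperPair_indicator hb hrow (fun x hx => hx.2)
      h0 h1 (fun _ => equilibriumPotentialOn_of_mem T')
      fun x hx => (graphLaplacian_equilibriumPotentialOn hb hdeg hrow (hTT' hx.1) hx.2).ge)

theorem tendsto_equilibriumPotentialOn (Ω : Finset X) (x : X) :
    Tendsto (equilibriumPotentialOn b Ω · x) atTop (𝓝 (equilibriumPotential b Ω x)) :=
  tendsto_atTop_ciSup (fun _ _ hTT' => equilibriumPotentialOn_mono hb hdeg hrow Ω hTT' x)
    ⟨1, by
      rintro _ ⟨T, rfl⟩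
      exact (equilibriumPotentialOn_mem_Icc hb hdeg hrow Ω T).2 x⟩

theorem equilibriumPotential_mem_Icc (Ω : Finset X) :
    equilibriumPotential b Ω ∈ Set.Icc 0 1 :=
  ⟨fun x => ge_of_tendsto' (tendsto_equilibriumPotentialOn hb hdeg hrow Ω x)
      fun T => (equilibriumPotentialOn_mem_Icc hb hdeg hrow Ω T).1 x,
    fun x => le_of_tendsto' (tendsto_equilibriumPotentialOn hb hdeg hrow Ω x)
      fun T => (equilibriumPotentialOn_mem_Icc hb hdeg hrow Ω T).2 x⟩

theorem equilibriumPotential_of_mem {Ω : Finset X} {x : X} (hx : x ∈ Ω) :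
    equilibriumPotential b Ω x = 1 :=
  tendsto_nhds_unique (tendsto_equilibriumPotentialOn hb hdeg hrow Ω x)
    (by simp [equilibriumPotentialOn_of_mem _ hx])

theorem graphLaplacian_equilibriumPotential {Ω : Finset X} {x : X} (hx : x ∉ Ω) :
    graphLaplacian b (equilibriumPotential b Ω) x = 0 := by
  have hlim := tendsto_equilibriumPotentialOn hb hdeg hrow Ω
  have hIcc := equilibriumPotentialOn_mem_Icc hb hdeg hrow Ω
  have hrow1 : Summable fun y => b x y * (1 : X → ℝ) y := by simpa using hrow x
  have hL := (hlim x).mul_const (graphDegree b x)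
  have hR := tendsto_tsum_mul_of_tendsto (hb x) hrow1 hlim (fun T => (hIcc T).1) fun T => (hIcc T).2
  have hharm : ∀ᶠ T in atTop, equilibriumPotentialOn b Ω T x * graphDegree b x =
      ∑' y, b x y * equilibriumPotentialOn b Ω T y := by
    filter_upwards [eventually_ge_atTop {x}] with T hT
    have h := graphLaplacian_equilibriumPotentialOn hb hdeg hrow
      (Finset.singleton_subset_iff.mp hT) hx
    rwa [graphLaplacian_eq_sub (hrow x) (summable_mul_of_le (hb x) (hIcc T).1 (hIcc T).2 hrow1),
      sub_eq_zero] at h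
  have hE := equilibriumPotential_mem_Icc hb hdeg hrow Ω
  rw [graphLaplacian_eq_sub (hrow x) (summable_mul_of_le (hb x) hE.1 hE.2 hrow1),
    tendsto_nhds_unique hL (hR.congr' (hharm.mono fun _ h => h.symm)), sub_self]

end Equilibrium

section Energy

variable {X : Type*} {b : X → X → ℝ}

theorem hasSum_prod_of_finite_rows {α β : Type*} {f : α × β → ℝ} {r : α → ℝ} (F : Finset α)
    (hF : ∀ p : α × β, p.1 ∉ F → f p = 0) (hrow : ∀ a, HasSum (fun c => f (a, c)) (r a)) :
    HasSum f (∑ a ∈ F, r a) := by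
  have hr : ∀ a ∉ F, r a = 0 := fun a ha =>
    (hrow a).unique (by simp [hF (a, _) ha])
  have hf : Summable f := summable_abs_iff.mp <|
    (summable_prod_of_nonneg fun _ => abs_nonneg _).2
      ⟨fun a => (hrow a).summable.abs,
        summable_of_ne_finset_zero (s := F) fun a ha => by simp [hF (a, _) ha]⟩
  have hsum : ∑' a, r a = ∑ a ∈ F, r a := tsum_eq_sum hr
  rw [← hsum]
  convert hf.hasSum using 1
  rw [hf.tsum_prod' fun a => (hrow a).summable]
  exact tsum_congr fun a => (hrow a).tsum_eq.symm

theorem hasSum_green (hsymm : ∀ x y, b x y = b y x) (hrow : ∀ x, Summable fun y => b x y)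
    {u w : X → ℝ} (hu : ∀ x, Summable fun y => b x y * u y) {S : Finset X}
    (hw : ∀ x ∉ S, w x = 0) :
    HasSum (fun p : X × X => b p.1 p.2 * (u p.1 - u p.2) * (w p.1 - w p.2))
      (2 * ∑ x ∈ S, graphLaplacian b u x * w x) := by
  set G : X × X → ℝ := fun p => b p.1 p.2 * (u p.1 - u p.2) * w p.1
  have hG : HasSum G (∑ x ∈ S, graphLaplacian b u x * w x) :=
    hasSum_prod_of_finite_rows S (fun p hp => by simp [G, hw _ hp])
      fun x => ((summable_mul_sub (hrow x) (hu x)).mul_right (w x)).hasSum_iff.mpr tsum_mul_right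
  have hG' : HasSum (G ∘ Equiv.prodComm X X) (∑ x ∈ S, graphLaplacian b u x * w x) :=
    (Equiv.prodComm X X).hasSum_iff.mpr hG
  convert hG.add hG' using 1
  · funext p
    simp only [G, Function.comp_apply, Equiv.prodComm_apply, Prod.fst_swap, Prod.snd_swap,
      hsymm p.2 p.1]
    ring
  · ring

theorem summable_mul_of_finite_support {u : X → ℝ} (hu : (support u).Finite) (x : X) :
    Summable fun y => b x y * u y :=
  summable_of_hasFiniteSupport <| hu.subset fun y hy h0 => hy (by simp [h0])

theorem energyForm_le_of_graphLaplacian_eq_zero (hb : ∀ x y, 0 ≤ b x y)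
    (hsymm : ∀ x y, b x y = b y x) (hrow : ∀ x, Summable fun y => b x y) {u φ : X → ℝ}
    (hu : (support u).Finite) (hφ : (support φ).Finite)
    (harm : ∀ x, u x ≠ φ x → graphLaplacian b u x = 0) :
    energyForm b u ≤ energyForm b φ := by
  set w := φ - u
  have hw : (support w).Finite := (hφ.union hu).subset (support_sub φ u)
  have hsq : ∀ {v : X → ℝ}, (support v).Finite →
      Summable fun p : X × X => b p.1 p.2 * (v p.1 - v p.2) ^ 2 := fun hv =>
    (hasSum_green hsymm hrow (summable_mul_of_finite_support hv) (S := hv.toFinset)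
      fun x hx => by simpa using hx).summable.congr fun p => by ring
  have hcross : HasSum (fun p : X × X => b p.1 p.2 * (u p.1 - u p.2) * (w p.1 - w p.2)) 0 := by
    have h := hasSum_green hsymm hrow (summable_mul_of_finite_support hu) (S := hw.toFinset)
      fun x hx => by simpa using hx
    rw [Finset.sum_eq_zero fun x hx => ?_, mul_zero] at h
    · exact h
    have hwx : w x ≠ 0 := by simpa using hx
    rw [harm x fun h => hwx (by simp [w, h]), zero_mul]
  have hsum := ((hsq hu).hasSum.add (hcross.mul_left 2)).add (hsq hw).hasSum
  have hφ_eq : (fun p : X × X => b p.1 p.2 * (φ p.1 - φ p.2) ^ 2) = fun p =>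
      b p.1 p.2 * (u p.1 - u p.2) ^ 2 + 2 * (b p.1 p.2 * (u p.1 - u p.2) * (w p.1 - w p.2)) +
        b p.1 p.2 * (w p.1 - w p.2) ^ 2 := funext fun p => by simp only [w, Pi.sub_apply]; ring
  have hw_nonneg : 0 ≤ ∑' p : X × X, b p.1 p.2 * (w p.1 - w p.2) ^ 2 :=
    tsum_nonneg fun p => mul_nonneg (hb p.1 p.2) (sq_nonneg _)
  rw [energyForm, energyForm, hφ_eq, hsum.tsum_eq, mul_zero, add_zero]
  linarith

end Energy

section Bound

variable {X : Type*} {b : X → X → ℝ}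
  (hb : ∀ x y, 0 ≤ b x y) (hsymm : ∀ x y, b x y = b y x) (hdeg : ∀ x, 0 < graphDegree b x)
  (hrow : ∀ x, Summable fun y => b x y)
include hb hsymm hdeg hrow

theorem energyForm_equilibriumPotentialOn_le {Ω T : Finset X} {φ : X → ℝ}
    (hφ : (support φ).Finite) (hφT : support φ ⊆ ↑T) (hφΩ : ∀ x ∈ Ω, φ x = 1) :
    energyForm b (equilibriumPotentialOn b Ω T) ≤ energyForm b φ := by
  refine energyForm_le_of_graphLaplacian_eq_zero hb hsymm hrow
    (support_equilibriumPotentialOn_finite Ω T) hφ fun x hx => ?_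
  have hxΩ : x ∉ Ω := fun h => hx (by rw [equilibriumPotentialOn_of_mem T h, hφΩ x h])
  refine graphLaplacian_equilibriumPotentialOn hb hdeg hrow (by_contra fun hxT => hx ?_) hxΩ
  rw [equilibriumPotentialOn_of_notMem hxT hxΩ, eq_comm, ← notMem_support]
  exact fun h => hxT (hφT h)

variable {m : X → ℝ} (hm : 0 ≤ m) {lam : ℝ} (hlam_pos : 0 < lam)
  (hlam : ∀ φ : X → ℝ, (support φ).Finite → lam * ∑' x, φ x ^ 2 * m x ≤ energyForm b φ)
include hm hlam_pos hlam

theorem mul_sum_sq_equilibriumPotential_le_energyForm {Ω : Finset X} {φ : X → ℝ}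
    (hφ : (support φ).Finite) (hφΩ : ∀ x ∈ Ω, φ x = 1) (s : Finset X) :
    lam * ∑ x ∈ s, equilibriumPotential b Ω x ^ 2 * m x ≤ energyForm b φ := by
  refine le_of_tendsto (((tendsto_finsetSum s fun x _ =>
    ((tendsto_equilibriumPotentialOn hb hdeg hrow Ω x).pow 2).mul_const (m x))).const_mul lam) ?_
  filter_upwards [eventually_ge_atTop hφ.toFinset] with T hT
  have hfin := support_equilibriumPotentialOn_finite (b := b) Ω T
  calc lam * ∑ x ∈ s, equilibriumPotentialOn b Ω T x ^ 2 * m x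
      ≤ lam * ∑' x, equilibriumPotentialOn b Ω T x ^ 2 * m x := by
        gcongr
        exact Summable.sum_le_tsum s (fun x _ => mul_nonneg (sq_nonneg _) (hm x))
          (summable_of_hasFiniteSupport <| hfin.subset fun x hx h0 => hx (by simp [h0]))
    _ ≤ energyForm b (equilibriumPotentialOn b Ω T) := hlam _ hfin
    _ ≤ energyForm b φ := energyForm_equilibriumPotentialOn_le hb hsymm hdeg hrow hφ
        (fun x hx => hT (hφ.mem_toFinset.mpr hx)) hφΩ

theorem sum_sq_mul_equilibriumPotential_le (Ω s : Finset X) :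
    ∑ x ∈ s, equilibriumPotential b Ω x ^ 2 * m x ≤ graphCap b Ω / lam := by
  have hind : (support ((↑Ω : Set X).indicator (1 : X → ℝ))).Finite :=
    Ω.finite_toSet.subset Set.support_indicator_subset
  rw [le_div_iff₀ hlam_pos, mul_comm]
  exact le_csInf ⟨_, _, hind, fun x hx => by simp [hx], rfl⟩ fun _ ⟨φ, hφ, hφΩ, hq⟩ =>
    hq ▸ mul_sum_sq_equilibriumPotential_le_energyForm hb hsymm hdeg hrow hm hlam_pos hlam hφ hφΩ s

theorem sum_sq_mul_le_of_le_mul_equilibriumPotential [DecidableEq X] {Ω : Finset X}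
    {u : X → ℝ} (hu0 : 0 ≤ u) {C : ℝ} (hu : ∀ x ∉ Ω, u x ≤ C * equilibriumPotential b Ω x)
    (s : Finset X) :
    ∑ x ∈ s, (if x ∈ Ω then 0 else u x ^ 2 * m x) ≤ C ^ 2 / lam * graphCap b Ω := by
  have hpt : ∀ x, (if x ∈ Ω then 0 else u x ^ 2 * m x) ≤
      C ^ 2 * (equilibriumPotential b Ω x ^ 2 * m x) := fun x => by
    split_ifs with hx
    · exact mul_nonneg (sq_nonneg C) (mul_nonneg (sq_nonneg _) (hm x))
    · calc u x ^ 2 * m x ≤ (C * equilibriumPotential b Ω x) ^ 2 * m x := by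
            gcongr
            exacts [hm x, hu0 x, hu x hx]
        _ = C ^ 2 * (equilibriumPotential b Ω x ^ 2 * m x) := by ring
  calc ∑ x ∈ s, (if x ∈ Ω then 0 else u x ^ 2 * m x)
      ≤ C ^ 2 * ∑ x ∈ s, equilibriumPotential b Ω x ^ 2 * m x := by
        rw [Finset.mul_sum]
        exact Finset.sum_le_sum fun x _ => hpt x
    _ ≤ C ^ 2 * (graphCap b Ω / lam) := by
        gcongr
        exact sum_sq_mul_equilibriumPotential_le hb hsymm hdeg hrow hm hlam_pos hlam Ω s
    _ = C ^ 2 / lam * graphCap b Ω := by ring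

end Bound

section Green

variable {X : Type*} {b : X → X → ℝ}

theorem le_of_graphLaplacian_ge (hb : ∀ x y, 0 ≤ b x y) (hdeg : ∀ x, 0 < graphDegree b x)
    (hrow : ∀ x, Summable fun y => b x y) {f g h : X → ℝ} (hf : 0 ≤ f)
    (hg_min : ∀ v : X → ℝ, (∀ x, 0 ≤ v x) → (∀ x, Summable fun y => b x y * v y) →
      (∀ x, graphLaplacian b v x = f x) → ∀ x, g x ≤ v x)
    (hh : 0 ≤ h) (hh_row : ∀ x, Summable fun y => b x y * h y)
    (hsuper : ∀ x, f x ≤ graphLaplacian b h x) : g ≤ h := by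
  have hpair : IsSubSuperPair b Set.univ f 0 h :=
    ⟨le_rfl, hh, hh_row, fun x _ => by simpa [graphLaplacian] using hf x, fun x _ => hsuper x⟩
  have hv0 := le_minimalSolution hb hdeg hrow hpair
  have hvh := minimalSolution_le hb hdeg hrow hpair
  exact fun x => (hg_min _ hv0 (fun x => summable_mul_of_le (hb x) hv0 hvh (hh_row x))
    (fun x => graphLaplacian_minimalSolution hb hdeg hrow hpair (Set.mem_univ x)) x).trans (hvh x)

theorem le_mul_equilibriumPotential [DecidableEq X] (hb : ∀ x y, 0 ≤ b x y)
    (hsymm : ∀ x y, b x y = b y x) (hdeg : ∀ x, 0 < graphDegree b x)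
    (hrow : ∀ x, Summable fun y => b x y) {o : X} {Ω : Finset X} (hoΩ : o ∈ Ω) {g : X → ℝ}
    (hg_nonneg : 0 ≤ g) (hg_row : ∀ x, Summable fun y => b x y * g y)
    (hg_eq : ∀ x, graphLaplacian b g x = if x = o then 1 else 0)
    (hg_min : ∀ v : X → ℝ, (∀ x, 0 ≤ v x) → (∀ x, Summable fun y => b x y * v y) →
      (∀ x, graphLaplacian b v x = if x = o then 1 else 0) → ∀ x, g x ≤ v x)
    {C : ℝ} (hC0 : 0 ≤ C) (hC : ∀ x ∈ Ω, (∃ y, 0 < b x y ∧ y ∉ Ω) → g x ≤ C) {x : X}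
    (hx : x ∉ Ω) : g x ≤ C * equilibriumPotential b Ω x := by
  set E := equilibriumPotential b Ω
  have hE := equilibriumPotential_mem_Icc hb hdeg hrow Ω
  set h : X → ℝ := fun z => if z ∈ Ω then g z else min (g z) (C * E z)
  have hhg : h ≤ g := fun z => by by_cases hz : z ∈ Ω <;> simp [h, hz]
  have hh0 : 0 ≤ h := fun z => by
    by_cases hz : z ∈ Ω
    · simpa [h, hz] using hg_nonneg z
    · simpa [h, hz] using ⟨hg_nonneg z, mul_nonneg hC0 (hE.1 z)⟩
  have hh_row x := summable_mul_of_le (hb x) hh0 hhg (hg_row x)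
  have hsuper : ∀ x, (if x = o then 1 else 0) ≤ graphLaplacian b h x := by
    intro x
    by_cases hxg : h x = g x
    · exact (hg_eq x).symm.le.trans (graphLaplacian_le_of_le hb (hrow x) (hg_row x) (hh_row x)
        (fun y _ => hhg y) hxg)
    have hxΩ : x ∉ Ω := fun hxΩ => hxg (by simp [h, hxΩ])
    have hxE : h x = C * E x := by
      have hmin : min (g x) (C * E x) ≠ g x := by simpa [h, hxΩ] using hxg
      simpa [h, hxΩ] using (min_choice (g x) (C * E x)).resolve_left hmin
    have hnbr : ∀ y, 0 < b x y → h y ≤ C * E y := by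
      intro y hxy
      by_cases hy : y ∈ Ω
      · have hEy : E y = 1 := equilibriumPotential_of_mem hb hdeg hrow hy
        simpa [h, hy, hEy] using hC y hy ⟨x, hsymm x y ▸ hxy, hxΩ⟩
      · simp [h, hy]
    rw [if_neg fun hxo : x = o => hxΩ (hxo ▸ hoΩ)]
    calc (0 : ℝ) = C * graphLaplacian b E x := by
          rw [graphLaplacian_equilibriumPotential hb hdeg hrow hxΩ, mul_zero]
      _ = graphLaplacian b (fun y => C * E y) x := (graphLaplacian_const_mul C E x).symm
      _ ≤ graphLaplacian b h x := graphLaplacian_le_of_le hb (hrow x)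
          (summable_mul_of_le (hb x) (fun y => mul_nonneg hC0 (hE.1 y))
            (fun y => mul_le_of_le_one_right hC0 (hE.2 y)) ((hrow x).mul_right C))
          (hh_row x) hnbr hxE
  have hgh := le_of_graphLaplacian_ge hb hdeg hrow (fun x => by split_ifs <;> norm_num) hg_min
    hh0 hh_row hsuper x
  simpa [h, hx] using hgh

end Green

theorem greens_function_l2_bound_general
    {X : Type*} [DecidableEq X]
    (b : X → X → ℝ) (m : X → ℝ)
    (hb_nonneg : ∀ x y, 0 ≤ b x y)
    (hb_symm : ∀ x y, b x y = b y x)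
    (hb_row : ∀ x, Summable fun y => b x y)
    (hm_pos : ∀ x, 0 < m x)
    -- connectivity
    (hconn : ∀ x y : X, ∃ (k : ℕ) (γ : ℕ → X), γ 0 = x ∧ γ k = y ∧
      ∀ i < k, 0 < b (γ i) (γ (i + 1)))
    -- positive bottom of the spectrum
    (lam : ℝ) (hlam_pos : 0 < lam)
    (hlam : ∀ φ : X → ℝ, (Function.support φ).Finite →
      lam * ∑' x, φ x ^ 2 * m x ≤ energyForm b φ)
    (o : X) (Ω : Finset X) (hoΩ : o ∈ Ω)
    -- `g` is the Green's function with pole `o`: the minimal nonnegative solution of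
    -- `L g = 𝟙_o / m(o)`
    (g : X → ℝ)
    (hg_nonneg : ∀ x, 0 ≤ g x)
    (hgF : ∀ x, Summable fun y => b x y * g y)
    (hg_eq : ∀ x, ∑' y, b x y * (g x - g y) = if x = o then 1 else 0)
    (hg_min : ∀ h : X → ℝ, (∀ x, 0 ≤ h x) → (∀ x, Summable fun y => b x y * h y) →
      (∀ x, ∑' y, b x y * (h x - h y) = if x = o then 1 else 0) → ∀ x, g x ≤ h x)
    -- `C` is the supremum of `g` on the boundary `∂Ω` (attained, as `Ω` is finite)
    (C : ℝ)
    (hC_bound : ∀ x ∈ Ω, (∃ y, 0 < b x y ∧ y ∉ Ω) → g x ≤ C)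
    (hC_mem : ∃ x ∈ Ω, (∃ y, 0 < b x y ∧ y ∉ Ω) ∧ g x = C) :
    (∑' x : X, ENNReal.ofReal (if x ∈ Ω then 0 else g x ^ 2 * m x)) ≤
        ENNReal.ofReal (C ^ 2 / lam * graphCap b Ω) ∧
      Summable fun x => g x ^ 2 * m x := by
  have hdeg : ∀ x, 0 < graphDegree b x := graphDegree_pos_of_connected hb_nonneg hb_row hconn
    (graphDegree_pos_of_graphLaplacian_ne_zero hb_nonneg hb_row (u := g) (x := o)
      (by simp [graphLaplacian, hg_eq o]))
  have hC0 : 0 ≤ C := by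
    obtain ⟨x, -, -, rfl⟩ := hC_mem
    exact hg_nonneg x
  have hgE : ∀ x ∉ Ω, g x ≤ C * equilibriumPotential b Ω x := fun _ =>
    le_mul_equilibriumPotential hb_nonneg hb_symm hdeg hb_row hoΩ hg_nonneg hgF hg_eq hg_min hC0
      hC_bound
  have hF_sum := sum_sq_mul_le_of_le_mul_equilibriumPotential hb_nonneg hb_symm hdeg hb_row
    (fun x => (hm_pos x).le) hlam_pos hlam hg_nonneg hgE
  have hF0 : 0 ≤ fun x => if x ∈ Ω then 0 else g x ^ 2 * m x := fun x => by
    dsimp only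
    split_ifs
    exacts [le_rfl, mul_nonneg (sq_nonneg (g x)) (hm_pos x).le]
  refine ⟨tsum_ofReal_le_of_sum_le hF0 hF_sum, (summable_of_sum_le hF0 hF_sum).congr_cofinite ?_⟩
  filter_upwards [Ω.eventually_cofinite_notMem] with x hx using if_neg hx

/-- Let `b` be a connected transient graph over `(X, m)` with positive
bottom of the spectrum `λ₀ > 0`.  Fix `o ∈ X`, a finite set `Ω` containing `o`, let
`g = G(o, ·)` be the (minimal positive) Green's function and `C = sup_{∂Ω} g`.  Then
`‖g‖²_{ℓ²(X∖Ω,m)} ≤ (C²/λ₀)·cap(Ω)`; in particular `g ∈ ℓ²(X, m)`. -/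
theorem greens_function_l2_bound
    {X : Type*} [DecidableEq X]
    (b : X → X → ℝ) (m : X → ℝ)
    (hb_nonneg : ∀ x y, 0 ≤ b x y)
    (hb_symm : ∀ x y, b x y = b y x)
    (hb_diag : ∀ x, b x x = 0)
    (hb_row : ∀ x, Summable fun y => b x y)
    (hm_pos : ∀ x, 0 < m x)
    -- connectivity
    (hconn : ∀ x y : X, ∃ (k : ℕ) (γ : ℕ → X), γ 0 = x ∧ γ k = y ∧
      ∀ i < k, 0 < b (γ i) (γ (i + 1)))
    -- positive bottom of the spectrum
    (lam : ℝ) (hlam_pos : 0 < lam)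
    (hlam : ∀ φ : X → ℝ, (Function.support φ).Finite →
      lam * ∑' x, φ x ^ 2 * m x ≤ energyForm b φ)
    (o : X) (Ω : Finset X) (hoΩ : o ∈ Ω)
    -- `g` is the Green's function with pole `o`: the minimal nonnegative solution of
    -- `L g = 𝟙_o / m(o)`
    (g : X → ℝ)
    (hg_nonneg : ∀ x, 0 ≤ g x)
    (hgF : ∀ x, Summable fun y => b x y * g y)
    (hg_eq : ∀ x, ∑' y, b x y * (g x - g y) = if x = o then 1 else 0)
    (hg_min : ∀ h : X → ℝ, (∀ x, 0 ≤ h x) → (∀ x, Summable fun y => b x y * h y) →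
      (∀ x, ∑' y, b x y * (h x - h y) = if x = o then 1 else 0) → ∀ x, g x ≤ h x)
    -- `C` is the supremum of `g` on the boundary `∂Ω` (attained, as `Ω` is finite)
    (C : ℝ)
    (hC_bound : ∀ x ∈ Ω, (∃ y, 0 < b x y ∧ y ∉ Ω) → g x ≤ C)
    (hC_mem : ∃ x ∈ Ω, (∃ y, 0 < b x y ∧ y ∉ Ω) ∧ g x = C) :
    (∑' x : X, ENNReal.ofReal (if x ∈ Ω then 0 else g x ^ 2 * m x)) ≤
        ENNReal.ofReal (C ^ 2 / lam * graphCap b Ω) ∧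
      Summable fun x => g x ^ 2 * m x :=
  greens_function_l2_bound_general b m hb_nonneg hb_symm hb_row hm_pos hconn lam hlam_pos hlam o Ω
    hoΩ g hg_nonneg hgF hg_eq hg_min C hC_bound hC_mem
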